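/- Stick-breaking weights sum to one almost surely: if β₁, β₂, … are i.i.d. Beta(1,α) with α > 0 and πⱼ = βⱼ ∏_{i<j}(1 − βᵢ), then ∑_{j=1}^∞ πⱼ = 1 almost surely. -/

import Mathlib

open MeasureTheory ProbabilityTheory

/-- The Beta distribution `Beta(a, b)` on `[0,1]`, with density
`x^(a-1) (1-x)^(b-1) / B(a,b)` with respect to Lebesgue measure, where
`B(a,b) = Γ(a)Γ(b)/Γ(a+b)`. -/
noncomputable def betaMeasure (a b : ℝ) : Measure ℝ :=
  (volume : Measure ℝ).withDensity fun x =>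
    ENNReal.ofReal
      (Set.indicator (Set.Ioo (0 : ℝ) 1)
        (fun x =>
          x ^ (a - 1) * (1 - x) ^ (b - 1) *
            (Real.Gamma (a + b) / (Real.Gamma a * Real.Gamma b))) x)

/-!
Since `1 - ∑_{j<n} πⱼ = ∏_{j<n} (1 - βⱼ)`, it suffices that these products tend to `0`.
They are nonnegative and decreasing in `n`, and by independence their expectations are `cⁿ`
with `c = 𝔼[1 - β₁] < 1` (as `β₁ > 0` a.s.). So the decreasing limit has expectation `0`
and vanishes almost surely.
-/

open Filter Topology Finset

lemma betaMeasure_Ioo_compl (a b : ℝ) : _root_.betaMeasure a b (Set.Ioo 0 1)ᶜ = 0 := by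
  rw [_root_.betaMeasure, withDensity_apply _ measurableSet_Ioo.compl]
  exact setLIntegral_eq_zero measurableSet_Ioo.compl fun x hx => by
    simp [Set.indicator_of_notMem hx]

lemma ae_mem_Ioo_of_map_eq_betaMeasure {Ω : Type*} [MeasurableSpace Ω] {μ : Measure Ω}
    {X : Ω → ℝ} {a b : ℝ} (hX : Measurable X) (hlaw : μ.map X = _root_.betaMeasure a b) :
    ∀ᵐ ω ∂μ, X ω ∈ Set.Ioo 0 1 :=
  ae_of_ae_map hX.aemeasurable <| hlaw ▸ mem_ae_iff.2 (betaMeasure_Ioo_compl a b)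

lemma sum_range_mul_prod_one_sub {R : Type*} [CommRing R] (g : ℕ → R) (n : ℕ) :
    ∑ j ∈ range n, g j * ∏ i ∈ range j, (1 - g i) = 1 - ∏ j ∈ range n, (1 - g j) := by
  induction n with
  | zero => simp
  | succ n ih => rw [sum_range_succ, prod_range_succ, ih]; ring

lemma hasSum_mul_prod_one_sub {g : ℕ → ℝ} (hg : ∀ i, g i ∈ Set.Icc 0 1)
    (hprod : Tendsto (fun n => ∏ i ∈ range n, (1 - g i)) atTop (𝓝 0)) :
    HasSum (fun j => g j * ∏ i ∈ range j, (1 - g i)) 1 := by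
  have hnonneg j : 0 ≤ g j * ∏ i ∈ range j, (1 - g i) :=
    mul_nonneg (hg j).1 (prod_nonneg fun i _ => sub_nonneg.2 (hg i).2)
  rw [hasSum_iff_tendsto_nat_of_nonneg hnonneg]
  simp_rw [sum_range_mul_prod_one_sub]
  simpa using hprod.const_sub 1

lemma integral_pos_of_ae_pos {Ω : Type*} [MeasurableSpace Ω] {μ : Measure Ω} [NeZero μ]
    {X : Ω → ℝ} (hint : Integrable X μ) (hpos : ∀ᵐ ω ∂μ, 0 < X ω) : 0 < ∫ ω, X ω ∂μ := by
  rw [integral_pos_iff_support_of_nonneg_ae (hpos.mono fun _ h => h.le) hint]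
  refine pos_iff_ne_zero.2 fun h => ?_
  obtain ⟨ω, hω, hω'⟩ := (hpos.and (measure_eq_zero_iff_ae_notMem.1 h)).exists
  exact hω' hω.ne'

namespace ProbabilityTheory

variable {Ω : Type*} [MeasurableSpace Ω] {μ : Measure Ω}

lemma iIndepFun.integral_prod_range {f : ℕ → Ω → ℝ} (hindep : iIndepFun f μ)
    (hmeas : ∀ i, Measurable (f i)) (n : ℕ) :
    ∫ ω, ∏ i ∈ range n, f i ω ∂μ = ∏ i ∈ range n, ∫ ω, f i ω ∂μ := by
  induction n with
  | zero =>
    have := hindep.isProbabilityMeasure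
    simp
  | succ n ih =>
    have hprod_meas : Measurable (∏ i ∈ range n, f i) := by
      simpa only [← Finset.prod_fn] using Finset.measurable_prod (range n) fun i _ => hmeas i
    have h := (hindep.indepFun_prod_range_succ hmeas n).integral_mul_eq_mul_integral
      hprod_meas.aestronglyMeasurable (hmeas n).aestronglyMeasurable
    simp only [Pi.mul_apply, Finset.prod_apply] at h
    simp only [prod_range_succ, h, ih]

lemma iIndepFun.ae_tendsto_prod_range_zero {f : ℕ → Ω → ℝ} (hindep : iIndepFun f μ)
    (hmeas : ∀ i, Measurable (f i)) (hf : ∀ᵐ ω ∂μ, ∀ i, f i ω ∈ Set.Icc 0 1) {c : ℝ}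
    (hc : c < 1) (hmean : ∀ i, ∫ ω, f i ω ∂μ ≤ c) :
    ∀ᵐ ω ∂μ, Tendsto (fun n => ∏ i ∈ range n, f i ω) atTop (𝓝 0) := by
  have := hindep.isProbabilityMeasure
  have hbound : ∀ᵐ ω ∂μ, ∀ n, ∏ i ∈ range n, f i ω ∈ Set.Icc 0 1 := by
    filter_upwards [hf] with ω hω n
    exact ⟨prod_nonneg fun i _ => (hω i).1, prod_le_one (fun i _ => (hω i).1) fun i _ => (hω i).2⟩
  have hint n : Integrable (fun ω => ∏ i ∈ range n, f i ω) μ := by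
    refine .of_bound (Finset.measurable_fun_prod _ fun i _ => hmeas i).aestronglyMeasurable 1 ?_
    filter_upwards [hbound] with ω hω
    rw [Real.norm_eq_abs, abs_le]
    exact ⟨by linarith [(hω n).1], (hω n).2⟩
  have hmean_nonneg i : 0 ≤ ∫ ω, f i ω ∂μ :=
    integral_nonneg_of_ae <| hf.mono fun ω hω => (hω i).1
  have hc0 : 0 ≤ c := (hmean_nonneg 0).trans (hmean 0)
  have hintegral n : ∫ ω, ∏ i ∈ range n, f i ω ∂μ ∈ Set.Icc 0 (c ^ n) := by
    rw [hindep.integral_prod_range hmeas n]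
    refine ⟨prod_nonneg fun i _ => hmean_nonneg i, ?_⟩
    simpa using prod_le_prod (s := range n) (fun i _ => hmean_nonneg i) fun i _ => hmean i
  have hlim : Tendsto (fun n => ∫ ω, ∏ i ∈ range n, f i ω ∂μ) atTop (𝓝 (∫ _, (0 : ℝ) ∂μ)) := by
    rw [integral_zero]
    exact tendsto_of_tendsto_of_tendsto_of_le_of_le tendsto_const_nhds
      (tendsto_pow_atTop_nhds_zero_of_lt_one hc0 hc) (fun n => (hintegral n).1)
      fun n => (hintegral n).2
  refine tendsto_of_integral_tendsto_of_antitone hint (integrable_zero _ _ _) hlim ?_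
    (hbound.mono fun ω hω n => (hω n).1)
  filter_upwards [hf] with ω hω
  refine antitone_nat_of_succ_le fun n => ?_
  rw [prod_range_succ]
  exact mul_le_of_le_one_right (prod_nonneg fun i _ => (hω i).1) (hω n).2

end ProbabilityTheory

theorem stickBreaking_weights_sum_one_general {Ω : Type*} [MeasurableSpace Ω]
    (P : Measure Ω) [IsProbabilityMeasure P] (α : ℝ)
    (B : ℕ → Ω → ℝ) (hBmeas : ∀ i, Measurable (B i))
    (hindep : iIndepFun B P)
    (hlaw : ∀ i, Measure.map (B i) P = _root_.betaMeasure 1 α) :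
    ∀ᵐ ω ∂P, (∑' j, B j ω * ∏ i ∈ Finset.range j, (1 - B i ω)) = 1 := by
  have hB : ∀ᵐ ω ∂P, ∀ i, B i ω ∈ Set.Ioo 0 1 :=
    ae_all_iff.2 fun i => ae_mem_Ioo_of_map_eq_betaMeasure (hBmeas i) (hlaw i)
  have hmean i : ∫ ω, 1 - B i ω ∂P = ∫ x, 1 - x ∂_root_.betaMeasure 1 α := by
    rw [← hlaw i, integral_map (hBmeas i).aemeasurable (by fun_prop)]
  have hB0_int : Integrable (B 0) P := by
    refine .of_bound (hBmeas 0).aestronglyMeasurable 1 ?_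
    filter_upwards [hB] with ω hω
    rw [Real.norm_eq_abs, abs_le]
    exact ⟨by linarith [(hω 0).1], (hω 0).2.le⟩
  have hmean_lt_one : ∫ x, 1 - x ∂_root_.betaMeasure 1 α < 1 := by
    rw [← hmean 0, integral_sub (integrable_const 1) hB0_int, integral_const, probReal_univ,
      one_smul, sub_lt_self_iff]
    exact integral_pos_of_ae_pos hB0_int (hB.mono fun ω hω => (hω 0).1)
  have hprod := (hindep.comp (fun _ x => 1 - x) fun _ => by fun_prop).ae_tendsto_prod_range_zero
    (fun i => (hBmeas i).const_sub 1)
    (hB.mono fun ω hω i => ⟨sub_nonneg.2 (hω i).2.le, sub_le_self _ (hω i).1.le⟩)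
    hmean_lt_one fun i => (hmean i).le
  filter_upwards [hB, hprod] with ω hω hprodω
  exact (hasSum_mul_prod_one_sub (fun i => Set.Ioo_subset_Icc_self (hω i)) hprodω).tsum_eq

/-- Stick-breaking weights sum to one almost surely: if `β₁, β₂, …` are i.i.d. `Beta(1, α)`
with `α > 0` and `πⱼ = βⱼ ∏_{i<j} (1 - βᵢ)`, then `∑_{j} πⱼ = 1` almost surely. -/
theorem stickBreaking_weights_sum_one {Ω : Type*} [MeasurableSpace Ω]
    (P : Measure Ω) [IsProbabilityMeasure P] (α : ℝ) (hα : 0 < α)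
    (B : ℕ → Ω → ℝ) (hBmeas : ∀ i, Measurable (B i))
    (hindep : iIndepFun B P)
    (hlaw : ∀ i, Measure.map (B i) P = _root_.betaMeasure 1 α) :
    ∀ᵐ ω ∂P, (∑' j, B j ω * ∏ i ∈ Finset.range j, (1 - B i ω)) = 1 :=
  stickBreaking_weights_sum_one_general P α B hBmeas hindep hlaw
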